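/- The following independence numbers of triple strong products of fraction graphs hold: α(E_{2/1} ⊠ E_{5/2} ⊠ E_{5/2}) = 10; α(E_{5/2} ⊠ E_{5/2} ⊠ E_{3/1}) = 15; α(E_{9/4} ⊠ E_{7/3} ⊠ E_{5/2}) = 9; α(E_{5/2} ⊠ E_{5/2} ⊠ E_{8/3}) = 11; α(E_{8/3} ⊠ E_{8/3} ⊠ E_{8/3}) = 12; α(E_{11/5} ⊠ E_{11/4} ⊠ E_{11/4}) = 11; α(E_{11/4} ⊠ E_{11/4} ⊠ E_{11/4}) = 13; α(E_{14/5} ⊠ E_{14/5} ⊠ E_{14/5}) = 14. -/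

import Mathlib

open SimpleGraph

/-- The fraction graph `E_{p/q}` on vertex set `ZMod p`: distinct `u, v` are adjacent
iff the representative of `u - v` or of `v - u` in `{0, …, p-1}` is strictly less than `q`. -/
def fractionGraph (p q : ℕ) : SimpleGraph (ZMod p) where
  Adj u v := u ≠ v ∧ ((u - v).val < q ∨ (v - u).val < q)
  symm := ⟨fun _ _ h => ⟨h.1.symm, h.2.symm⟩⟩
  loopless := ⟨fun _ h => h.1 rfl⟩

/-- The cycle graph `C_n` on vertex set `ZMod n`: `i` is adjacent to `i ± 1`. -/
def cycleGraphZMod (n : ℕ) : SimpleGraph (ZMod n) where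
  Adj u v := u ≠ v ∧ (u - v = 1 ∨ v - u = 1)
  symm := ⟨fun _ _ h => ⟨h.1.symm, h.2.symm⟩⟩
  loopless := ⟨fun _ h => h.1 rfl⟩

/-- The strong product of two simple graphs. -/
def strongProd {α β : Type*} (G : SimpleGraph α) (H : SimpleGraph β) :
    SimpleGraph (α × β) where
  Adj x y := x ≠ y ∧ (x.1 = y.1 ∨ G.Adj x.1 y.1) ∧ (x.2 = y.2 ∨ H.Adj x.2 y.2)
  symm := ⟨fun _ _ h => ⟨h.1.symm, h.2.1.imp Eq.symm (fun h' => h'.symm), h.2.2.imp Eq.symm (fun h' => h'.symm)⟩⟩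
  loopless := ⟨fun _ h => h.1 rfl⟩

/-- The `n`-fold strong power of a simple graph. -/
def strongPow {α : Type*} (G : SimpleGraph α) (n : ℕ) : SimpleGraph (Fin n → α) where
  Adj u v := u ≠ v ∧ ∀ i, u i = v i ∨ G.Adj (u i) (v i)
  symm := ⟨fun _ _ h => ⟨h.1.symm, fun i => (h.2 i).imp Eq.symm (fun h' => h'.symm)⟩⟩
  loopless := ⟨fun _ h => h.1 rfl⟩

/-- The strong product of a family of simple graphs. -/
def strongProdFamily {ι : Type*} {α : ι → Type*} (G : ∀ i, SimpleGraph (α i)) :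
    SimpleGraph (∀ i, α i) where
  Adj u v := u ≠ v ∧ ∀ i, u i = v i ∨ (G i).Adj (u i) (v i)
  symm := ⟨fun _ _ h => ⟨h.1.symm, fun i => (h.2 i).imp Eq.symm (fun h' => h'.symm)⟩⟩
  loopless := ⟨fun _ h => h.1 rfl⟩

/-- A finset of vertices is independent if its elements are pairwise non-adjacent. -/
def IsIndepFinset {α : Type*} (G : SimpleGraph α) (s : Finset α) : Prop :=
  ∀ u ∈ s, ∀ v ∈ s, u ≠ v → ¬ G.Adj u v

/-- The independence number of a graph: the greatest cardinality of an independent set. -/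
noncomputable def indepNumber {α : Type*} (G : SimpleGraph α) : ℕ :=
  sSup {n : ℕ | ∃ s : Finset α, IsIndepFinset G s ∧ s.card = n}

/-- A cohomomorphism from `G` to `H`: a map sending distinct non-adjacent vertices
to distinct non-adjacent vertices. -/
def IsCohom {α β : Type*} (G : SimpleGraph α) (H : SimpleGraph β) (f : α → β) : Prop :=
  ∀ u v, u ≠ v → ¬ G.Adj u v → f u ≠ f v ∧ ¬ H.Adj (f u) (f v)

/-- Disjoint union of two simple graphs. -/
def disjUnion {α β : Type*} (G : SimpleGraph α) (H : SimpleGraph β) :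
    SimpleGraph (α ⊕ β) where
  Adj x y := (∃ a b, x = Sum.inl a ∧ y = Sum.inl b ∧ G.Adj a b) ∨
             (∃ a b, x = Sum.inr a ∧ y = Sum.inr b ∧ H.Adj a b)
  symm := by
    constructor
    rintro x y (⟨a, b, rfl, rfl, h⟩ | ⟨a, b, rfl, rfl, h⟩)
    · exact Or.inl ⟨b, a, rfl, rfl, h.symm⟩
    · exact Or.inr ⟨b, a, rfl, rfl, h.symm⟩
  loopless := by
    constructor
    rintro x (⟨a, b, rfl, heq, h⟩ | ⟨a, b, rfl, heq, h⟩) <;>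
      · injection heq with h'
        subst h'
        exact h.ne rfl

/-- The open circle graph `E_r^o` on the circle `ℝ/ℤ`: distinct points are adjacent
iff their distance is strictly less than `1/r`. -/
noncomputable def openCircleGraph (r : ℝ) : SimpleGraph (AddCircle (1 : ℝ)) where
  Adj x y := x ≠ y ∧ dist x y < 1 / r
  symm := ⟨fun x y h => ⟨h.1.symm, (dist_comm y x).trans_lt h.2⟩⟩
  loopless := ⟨fun _ h => h.1 rfl⟩

/-- The closed circle graph `E_r^c` on the circle `ℝ/ℤ`: distinct points are adjacent
iff their distance is at most `1/r`. -/
noncomputable def closedCircleGraph (r : ℝ) : SimpleGraph (AddCircle (1 : ℝ)) where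
  Adj x y := x ≠ y ∧ dist x y ≤ 1 / r
  symm := ⟨fun x y h => ⟨h.1.symm, (dist_comm y x).trans_le h.2⟩⟩
  loopless := ⟨fun _ h => h.1 rfl⟩

/-- The Shannon capacity `Θ(G) = sup_{n ≥ 1} α(G^{⊠n})^{1/n}`. -/
noncomputable def shannonCapacity {α : Type*} (G : SimpleGraph α) : ℝ :=
  ⨆ n : ℕ+, (indepNumber (strongPow G n) : ℝ) ^ (((n : ℕ) : ℝ)⁻¹)


section CertMachinery
set_option maxHeartbeats 1000000
def certM {V ι : Type*} [Fintype ι] (d : ι → ℚ) (L : Option V → ι → ℚ)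
    (a b : Option V) : ℚ := ∑ k, d k * (L a k * L b k)

structure Cert {V : Type*} (G : SimpleGraph V) (t : ℚ) where
  ι : Type
  inst : Fintype ι
  d : ι → ℚ
  L : Option V → ι → ℚ
  hd : ∀ k, 0 ≤ d k
  ht : 0 < t
  hzero : ∀ u v : V, u ≠ v → ¬ G.Adj u v →
    certM (ι := ι) d L (some u) (some v) = 0
  hcc : 0 < certM (ι := ι) d L none none
  hvv : ∀ v : V, 0 < certM (ι := ι) d L (some v) (some v)
  hratio : ∀ v : V, certM (ι := ι) d L none none * certM (ι := ι) d L (some v) (some v)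
      ≤ t * (certM (ι := ι) d L none (some v))^2
attribute [instance] Cert.inst

instance fractionGraph.adjDecidable (p q : ℕ) : DecidableRel (fractionGraph p q).Adj :=
  fun u v => decidable_of_iff (u ≠ v ∧ ((u - v).val < q ∨ (v - u).val < q)) Iff.rfl

def vrow {p : ℕ} (o : Option (ZMod p)) : Fin (p+1) :=
  o.elim 0 fun v => ⟨min (v.val + 1) p, by omega⟩

lemma certM_int {V : Type*} {n : ℕ} (c : Fin n → ℤ) (w : Option V → Fin n → ℤ)
    (a b : Option V) :
    certM (fun k => ((c k : ℤ) : ℚ)) (fun o k => ((w o k : ℤ) : ℚ)) a b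
      = ((∑ k, c k * (w a k * w b k) : ℤ) : ℚ) := by
  unfold certM
  push_cast
  rfl

def certOfInt (p q : ℕ) (N D : ℕ) (c : Fin (p+1) → ℤ) (w : Fin (p+1) → Fin (p+1) → ℤ)
    (hN : 0 < N) (hD : 0 < D)
    (hc : ∀ k, 0 ≤ c k)
    (hz : ∀ u v : ZMod p, u ≠ v → ¬ (fractionGraph p q).Adj u v →
       (∑ k, c k * (w (vrow (some u)) k * w (vrow (some v)) k)) = 0)
    (hcc : 0 < ∑ k, c k * (w (vrow (none : Option (ZMod p))) k * w (vrow (none : Option (ZMod p))) k))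
    (hvv : ∀ v : ZMod p, 0 < ∑ k, c k * (w (vrow (some v)) k * w (vrow (some v)) k))
    (hr : ∀ v : ZMod p, (D : ℤ) * ((∑ k, c k * (w (vrow (none : Option (ZMod p))) k * w (vrow (none : Option (ZMod p))) k))
          * (∑ k, c k * (w (vrow (some v)) k * w (vrow (some v)) k)))
        ≤ (N : ℤ) * (∑ k, c k * (w (vrow (none : Option (ZMod p))) k * w (vrow (some v)) k))^2) :
    Cert (fractionGraph p q) ((N : ℚ)/(D : ℚ)) where
  ι := Fin (p+1)
  inst := inferInstance
  d := fun k => ((c k : ℤ) : ℚ)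
  L := fun o k => ((w (vrow o) k : ℤ) : ℚ)
  hd := fun k => Int.cast_nonneg_iff.mpr (hc k)
  ht := div_pos (by exact_mod_cast hN) (by exact_mod_cast hD)
  hzero := fun u v h1 h2 => by
    rw [certM_int]
    exact_mod_cast hz u v h1 h2
  hcc := by
    rw [certM_int]
    exact_mod_cast hcc
  hvv := fun v => by
    rw [certM_int]
    exact_mod_cast hvv v
  hratio := fun v => by
    rw [certM_int, certM_int, certM_int]
    rw [div_mul_eq_mul_div, le_div_iff₀ (by exact_mod_cast hD : (0:ℚ) < (D:ℚ))]
    have h' : ((∑ k, c k * (w (vrow (none : Option (ZMod p))) k * w (vrow (none : Option (ZMod p))) k))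
          * (∑ k, c k * (w (vrow (some v)) k * w (vrow (some v)) k))) * (D : ℤ)
        ≤ (N : ℤ) * (∑ k, c k * (w (vrow (none : Option (ZMod p))) k * w (vrow (some v)) k))^2 := by
      linarith [hr v]
    exact_mod_cast h'
theorem Cert.bound {V : Type*} {G : SimpleGraph V} {t : ℚ} (C : Cert G t)
    (s : Finset V) (hs : IsIndepFinset G s) : (s.card : ℚ) ≤ t := by
  classical
  set M := certM (ι := C.ι) C.d C.L with hM
  set x : V → ℚ := fun v => -(M none (some v)) / (M (some v) (some v)) with hx
  have key : 0 ≤ M none none + 2 * ∑ v ∈ s, x v * M none (some v)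
      + ∑ v ∈ s, ∑ w ∈ s, x v * x w * M (some v) (some w) := by
    have expand : M none none + 2 * ∑ v ∈ s, x v * M none (some v)
        + ∑ v ∈ s, ∑ w ∈ s, x v * x w * M (some v) (some w)
        = ∑ k, C.d k * (C.L none k + ∑ v ∈ s, x v * C.L (some v) k)^2 := by
      have h2 : ∑ v ∈ s, x v * M none (some v)
          = ∑ k, C.d k * (C.L none k * ∑ v ∈ s, x v * C.L (some v) k) := by
        simp only [hM, certM, Finset.mul_sum]
        rw [Finset.sum_comm]
        exact Finset.sum_congr rfl fun v _ => Finset.sum_congr rfl fun k _ => by ring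
      have inner : ∀ v w : V, ∑ k, C.d k * ((x v * C.L (some v) k) * (x w * C.L (some w) k))
          = x v * x w * M (some v) (some w) := by
        intro v w
        rw [show M (some v) (some w) = ∑ k, C.d k * (C.L (some v) k * C.L (some w) k) from rfl,
          Finset.mul_sum]
        exact Finset.sum_congr rfl fun k _ => by ring
      have h3 : ∑ v ∈ s, ∑ w ∈ s, x v * x w * M (some v) (some w)
          = ∑ k, C.d k * ((∑ v ∈ s, x v * C.L (some v) k) * (∑ w ∈ s, x w * C.L (some w) k)) := by
        calc ∑ v ∈ s, ∑ w ∈ s, x v * x w * M (some v) (some w)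
            = ∑ v ∈ s, ∑ w ∈ s, ∑ k, C.d k * ((x v * C.L (some v) k) * (x w * C.L (some w) k)) := by
              exact Finset.sum_congr rfl fun v _ => Finset.sum_congr rfl fun w _ => (inner v w).symm
          _ = ∑ k, ∑ v ∈ s, ∑ w ∈ s, C.d k * ((x v * C.L (some v) k) * (x w * C.L (some w) k)) :=
              (Finset.sum_congr rfl fun v _ => Finset.sum_comm).trans Finset.sum_comm
          _ = ∑ k, C.d k * ((∑ v ∈ s, x v * C.L (some v) k) * (∑ w ∈ s, x w * C.L (some w) k)) := by
              refine Finset.sum_congr rfl fun k _ => ?_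
              rw [Finset.sum_mul_sum, Finset.mul_sum]
              refine Finset.sum_congr rfl fun v _ => ?_
              rw [Finset.mul_sum]
      rw [h2, h3]
      have hcc' : M none none = ∑ k, C.d k * (C.L none k * C.L none k) := rfl
      rw [hcc', Finset.mul_sum, ← Finset.sum_add_distrib, ← Finset.sum_add_distrib]
      exact Finset.sum_congr rfl fun k _ => by ring
    rw [expand]
    exact Finset.sum_nonneg fun k _ => mul_nonneg (C.hd k) (sq_nonneg _)
  have diag : ∀ v ∈ s, ∑ w ∈ s, x v * x w * M (some v) (some w)
      = x v ^ 2 * M (some v) (some v) := by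
    intro v hv
    rw [Finset.sum_eq_single_of_mem v hv (fun w hw hne => by
      have h0 : M (some v) (some w) = 0 :=
        C.hzero v w (Ne.symm hne) (hs v hv w hw (Ne.symm hne))
      rw [h0]; ring)]
    ring
  rw [Finset.sum_congr rfl diag] at key
  have hterm : ∀ v ∈ s, 2 * (x v * M none (some v)) + x v ^ 2 * M (some v) (some v)
      = -(M none (some v) ^ 2 / M (some v) (some v)) := by
    intro v _
    have hvv := C.hvv v
    rw [hx]
    field_simp
    ring
  have key2 : ∑ v ∈ s, M none (some v) ^ 2 / M (some v) (some v) ≤ M none none := by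
    have comb : 2 * ∑ v ∈ s, x v * M none (some v)
        + ∑ v ∈ s, x v ^ 2 * M (some v) (some v)
        = - ∑ v ∈ s, M none (some v) ^ 2 / M (some v) (some v) := by
      rw [Finset.mul_sum, ← Finset.sum_add_distrib, ← Finset.sum_neg_distrib]
      exact Finset.sum_congr rfl fun v hv => hterm v hv
    linarith [key, comb]
  have hlow : ∀ v ∈ s, M none none / t ≤ M none (some v) ^ 2 / M (some v) (some v) := by
    intro v _
    rw [div_le_div_iff₀ C.ht (C.hvv v)]
    linarith [C.hratio v]
  have : (s.card : ℚ) * (M none none / t) ≤ M none none := by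
    calc (s.card : ℚ) * (M none none / t) = ∑ _v ∈ s, M none none / t := by
          rw [Finset.sum_const, nsmul_eq_mul]
        _ ≤ ∑ v ∈ s, M none (some v) ^ 2 / M (some v) (some v) :=
          Finset.sum_le_sum hlow
        _ ≤ M none none := key2
  have hcc : 0 < M none none := C.hcc
  have ht := C.ht
  have h1 : M none none * (s.card : ℚ) ≤ M none none * t := by
    have h2 := mul_le_mul_of_nonneg_right this (le_of_lt ht)
    have h3 : (s.card : ℚ) * (M none none / t) * t = M none none * (s.card : ℚ) := by
      field_simp
    linarith [h2, h3 ▸ h2]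
  exact le_of_mul_le_mul_left h1 hcc

instance IsIndepFinset.dec {α : Type*} [DecidableEq α] (G : SimpleGraph α)
    [DecidableRel G.Adj] (s : Finset α) : Decidable (IsIndepFinset G s) :=
  decidable_of_iff (∀ u ∈ s, ∀ v ∈ s, u ≠ v → ¬ G.Adj u v) Iff.rfl

lemma certM_prod {V W : Type*} {G : SimpleGraph V} {H : SimpleGraph W} {t u : ℚ}
    (CG : Cert G t) (CH : Cert H u) (o o' : Option (V × W)) :
    certM (fun k : CG.ι × CH.ι => CG.d k.1 * CH.d k.2)
        (fun o k => CG.L (o.map Prod.fst) k.1 * CH.L (o.map Prod.snd) k.2) o o'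
      = certM CG.d CG.L (o.map Prod.fst) (o'.map Prod.fst)
        * certM CH.d CH.L (o.map Prod.snd) (o'.map Prod.snd) := by
  simp only [certM, Finset.sum_mul_sum]
  rw [← Finset.sum_product']
  exact Finset.sum_congr rfl fun k _ => by ring

def Cert.prod {V W : Type*} {G : SimpleGraph V} {H : SimpleGraph W} {t u : ℚ}
    (CG : Cert G t) (CH : Cert H u) : Cert (strongProd G H) (t * u) where
  ι := CG.ι × CH.ι
  inst := instFintypeProd _ _
  d := fun k => CG.d k.1 * CH.d k.2
  L := fun o k => CG.L (o.map Prod.fst) k.1 * CH.L (o.map Prod.snd) k.2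
  hd := fun k => mul_nonneg (CG.hd k.1) (CH.hd k.2)
  ht := mul_pos CG.ht CH.ht
  hzero := by
    intro a b hne hnadj
    rw [certM_prod]
    simp only [Option.map_some]
    have : ¬ ((a.1 = b.1 ∨ G.Adj a.1 b.1) ∧ (a.2 = b.2 ∨ H.Adj a.2 b.2)) := by
      intro hc
      exact hnadj ⟨hne, hc.1, hc.2⟩
    rcases not_and_or.mp this with h | h
    · rcases not_or.mp h with ⟨h1, h2⟩
      rw [CG.hzero a.1 b.1 h1 h2, zero_mul]
    · rcases not_or.mp h with ⟨h1, h2⟩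
      rw [CH.hzero a.2 b.2 h1 h2, mul_zero]
  hcc := by
    rw [certM_prod]
    exact mul_pos CG.hcc CH.hcc
  hvv := by
    intro v
    rw [certM_prod]
    exact mul_pos (CG.hvv v.1) (CH.hvv v.2)
  hratio := by
    intro v
    rw [certM_prod, certM_prod, certM_prod]
    simp only [Option.map_some, Option.map_none]
    have h1 := CG.hratio v.1
    have h2 := CH.hratio v.2
    have hA1 := CG.hcc
    have hA2 := CH.hcc
    have hB1 := CG.hvv v.1
    have hB2 := CH.hvv v.2
    nlinarith [sq_nonneg (certM CG.d CG.L none (some v.1)),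
      sq_nonneg (certM CH.d CH.L none (some v.2)),
      mul_pos hA1 hB1, mul_pos hA2 hB2, mul_le_mul h1 h2 (le_of_lt (mul_pos hA2 hB2))
        (mul_nonneg (le_of_lt CG.ht) (sq_nonneg _))]

instance strongProd.adjDecidable {α β : Type*} [DecidableEq α] [DecidableEq β]
    (G : SimpleGraph α) (H : SimpleGraph β) [DecidableRel G.Adj] [DecidableRel H.Adj] :
    DecidableRel (strongProd G H).Adj := fun x y =>
  decidable_of_iff (x ≠ y ∧ (x.1 = y.1 ∨ G.Adj x.1 y.1) ∧ (x.2 = y.2 ∨ H.Adj x.2 y.2)) Iff.rfl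

theorem Cert.card_le {V : Type*} {G : SimpleGraph V} {t : ℚ} (C : Cert G t)
    {k : ℕ} (h : t < (k : ℚ) + 1) (s : Finset V) (hs : IsIndepFinset G s) : s.card ≤ k := by
  have h1 : (s.card : ℚ) < (k : ℚ) + 1 := lt_of_le_of_lt (C.bound s hs) h
  have h2 : (s.card : ℚ) < ((k + 1 : ℕ) : ℚ) := by push_cast; linarith
  exact Nat.lt_succ_iff.mp (by exact_mod_cast h2)

theorem indepNum_eq_of {V : Type*} {G : SimpleGraph V} {k : ℕ} (s : Finset V)
    (hs : IsIndepFinset G s) (hcard : s.card = k)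
    (hub : ∀ s' : Finset V, IsIndepFinset G s' → s'.card ≤ k) :
    indepNumber G = k := by
  have hmem : k ∈ {n : ℕ | ∃ s : Finset V, IsIndepFinset G s ∧ s.card = n} := ⟨s, hs, hcard⟩
  have hb : ∀ n ∈ {n : ℕ | ∃ s : Finset V, IsIndepFinset G s ∧ s.card = n}, n ≤ k := by
    rintro n ⟨s', h', rfl⟩
    exact hub s' h'
  exact le_antisymm (csSup_le ⟨k, hmem⟩ hb) (le_csSup ⟨k, fun n hn => hb n hn⟩ hmem)

def wc2q1 : Fin 3 → Fin 3 → ℤ := ![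
    ![(2 : ℤ), (0 : ℤ), (0 : ℤ)],
    ![(1 : ℤ), (1 : ℤ), (0 : ℤ)],
    ![(1 : ℤ), (-1 : ℤ), (1 : ℤ)]]

def cc2q1 : Fin 3 → ℤ := ![(1 : ℤ), (1 : ℤ), (0 : ℤ)]

def certc2q1 : Cert (fractionGraph 2 1) (2/1) :=
  certOfInt 2 1 2 1 cc2q1 wc2q1 (by norm_num) (by norm_num) (by decide) (by decide)
    (by decide) (by decide) (by decide)

def wc3q1 : Fin 4 → Fin 4 → ℤ := ![
    ![(3 : ℤ), (0 : ℤ), (0 : ℤ), (0 : ℤ)],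
    ![(1 : ℤ), (2 : ℤ), (0 : ℤ), (0 : ℤ)],
    ![(1 : ℤ), (-1 : ℤ), (1 : ℤ), (0 : ℤ)],
    ![(1 : ℤ), (-1 : ℤ), (-1 : ℤ), (1 : ℤ)]]

def cc3q1 : Fin 4 → ℤ := ![(2 : ℤ), (1 : ℤ), (3 : ℤ), (0 : ℤ)]

def certc3q1 : Cert (fractionGraph 3 1) (3/1) :=
  certOfInt 3 1 3 1 cc3q1 wc3q1 (by norm_num) (by norm_num) (by decide) (by decide)
    (by decide) (by decide) (by decide)

def wc5q2 : Fin 6 → Fin 6 → ℤ := ![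
    ![(1118069 : ℤ), (0 : ℤ), (0 : ℤ), (0 : ℤ), (0 : ℤ), (0 : ℤ)],
    ![(500000 : ℤ), (309034500 : ℤ), (0 : ℤ), (0 : ℤ), (0 : ℤ), (0 : ℤ)],
    ![(500000 : ℤ), (95483321 : ℤ), (77262903811 : ℤ), (0 : ℤ), (0 : ℤ), (0 : ℤ)],
    ![(500000 : ℤ), (-250000000 : ℤ), (47741660500 : ℤ), (4278811000 : ℤ), (0 : ℤ), (0 : ℤ)],
    ![(500000 : ℤ), (-250000000 : ℤ), (-47750000000 : ℤ), (-762722401 : ℤ), (4564311 : ℤ), (0 : ℤ)],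
    ![(500000 : ℤ), (95483321 : ℤ), (-77254346189 : ℤ), (-3407027599 : ℤ), (-3993311 : ℤ), (1 : ℤ)]]

def cc5q2 : Fin 6 → ℤ := ![(310874475339663516964628099313 : ℤ), (1005953947988536933464154 : ℤ), (14557127278375306166 : ℤ), (1051379588841169557 : ℤ), (338149648608124257165083 : ℤ), (1652335174038278660976105562109446000 : ℤ)]

def certc5q2 : Cert (fractionGraph 5 2) (1118069/500000) :=
  certOfInt 5 2 1118069 500000 cc5q2 wc5q2 (by norm_num) (by norm_num) (by decide) (by decide)
    (by decide) (by decide) (by decide)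

def wc9q4 : Fin 10 → Fin 10 → ℤ := ![
    ![(5167667 : ℤ), (0 : ℤ), (0 : ℤ), (0 : ℤ), (0 : ℤ), (0 : ℤ), (0 : ℤ), (0 : ℤ), (0 : ℤ), (0 : ℤ)],
    ![(2500000 : ℤ), (2667667000 : ℤ), (0 : ℤ), (0 : ℤ), (0 : ℤ), (0 : ℤ), (0 : ℤ), (0 : ℤ), (0 : ℤ), (0 : ℤ)],
    ![(2500000 : ℤ), (2037211626 : ℤ), (286997596186 : ℤ), (0 : ℤ), (0 : ℤ), (0 : ℤ), (0 : ℤ), (0 : ℤ), (0 : ℤ), (0 : ℤ)],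
    ![(2500000 : ℤ), (461073191 : ℤ), (434944682151 : ℤ), (4448287872 : ℤ), (0 : ℤ), (0 : ℤ), (0 : ℤ), (0 : ℤ), (0 : ℤ), (0 : ℤ)],
    ![(2500000 : ℤ), (-1332107258 : ℤ), (381581681762 : ℤ), (3511077887 : ℤ), (26844042601 : ℤ), (0 : ℤ), (0 : ℤ), (0 : ℤ), (0 : ℤ), (0 : ℤ)],
    ![(2500000 : ℤ), (-2500000000 : ℤ), (148946371000 : ℤ), (2423008076 : ℤ), (11850524116 : ℤ), (26894359356240 : ℤ), (0 : ℤ), (0 : ℤ), (0 : ℤ), (0 : ℤ)],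
    ![(2500000 : ℤ), (-2500000000 : ℤ), (-152500000000 : ℤ), (-599632932 : ℤ), (3230696388 : ℤ), (5884971100526 : ℤ), (24518855575306 : ℤ), (0 : ℤ), (0 : ℤ), (0 : ℤ)],
    ![(2500000 : ℤ), (-1332107258 : ℤ), (-382704913738 : ℤ), (-2953996068 : ℤ), (-13791557436 : ℤ), (-4217210093639 : ℤ), (-1850404874629 : ℤ), (27335395154684 : ℤ), (0 : ℤ), (0 : ℤ)],
    ![(2500000 : ℤ), (461073191 : ℤ), (-434714759849 : ℤ), (-3546240052 : ℤ), (-15443420204 : ℤ), (-15806182453369 : ℤ), (-7283178942899 : ℤ), (-11651770494127 : ℤ), (4932946065 : ℤ), (0 : ℤ)],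
    ![(2500000 : ℤ), (2037211626 : ℤ), (-282549308314 : ℤ), (-3281155585 : ℤ), (-12659253911 : ℤ), (-12697102083374 : ℤ), (-15283661488834 : ℤ), (-15382866839189 : ℤ), (-4808819849 : ℤ), (1 : ℤ)]]

def cc9q4 : Fin 10 → ℤ := ![(117789282752993129965032879089346137547464239856044465251907167572136922340928 : ℤ), (110386044016169493760871277308361704766247286351748986335163991206676960 : ℤ), (3975213203898834966911491057029627087751100858410195527460304670240 : ℤ), (508975686861326583353101760993821101472541874280662484495059512093125 : ℤ), (6371908141144342911322250177624880208454761758027302978917829556875 : ℤ), (4936320034235205157860026045490487045591934905370845419378000 : ℤ), (4615395294087052405083131153717552542132591497353334319902000 : ℤ), (2270464701678301344664636682271636531112972916289014899860000 : ℤ), (47640397498513416467799642343129349849052852868155220395874640076000 : ℤ), (57607175507179417220772940284246927919493014516281680189082796599141045234245068224000 : ℤ)]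

def certc9q4 : Cert (fractionGraph 9 4) (5167667/2500000) :=
  certOfInt 9 4 5167667 2500000 cc9q4 wc9q4 (by norm_num) (by norm_num) (by decide) (by decide)
    (by decide) (by decide) (by decide)

def wc7q3 : Fin 8 → Fin 8 → ℤ := ![
    ![(21109791 : ℤ), (0 : ℤ), (0 : ℤ), (0 : ℤ), (0 : ℤ), (0 : ℤ), (0 : ℤ), (0 : ℤ)],
    ![(10000000 : ℤ), (11109791000 : ℤ), (0 : ℤ), (0 : ℤ), (0 : ℤ), (0 : ℤ), (0 : ℤ), (0 : ℤ)],
    ![(10000000 : ℤ), (6908942591 : ℤ), (3585727984609 : ℤ), (0 : ℤ), (0 : ℤ), (0 : ℤ), (0 : ℤ), (0 : ℤ)],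
    ![(10000000 : ℤ), (-2463804613 : ℤ), (4442450086013 : ℤ), (17914209048174 : ℤ), (0 : ℤ), (0 : ℤ), (0 : ℤ), (0 : ℤ)],
    ![(10000000 : ℤ), (-10000000000 : ℤ), (1976195387000 : ℤ), (6643434965168 : ℤ), (10497873227632 : ℤ), (0 : ℤ), (0 : ℤ), (0 : ℤ)],
    ![(10000000 : ℤ), (-10000000000 : ℤ), (-1990000000000 : ℤ), (534890505413 : ℤ), (-3972417488801 : ℤ), (3279767909489 : ℤ), (0 : ℤ), (0 : ℤ)],
    ![(10000000 : ℤ), (-2463804613 : ℤ), (-4456492504987 : ℤ), (-9411256664413 : ℤ), (2505115331884 : ℤ), (-2141298136148 : ℤ), (2391201633 : ℤ), (0 : ℤ)],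
    ![(10000000 : ℤ), (6908942591 : ℤ), (-3557867628391 : ℤ), (-15672710365450 : ℤ), (-8990445946859 : ℤ), (-1051167987533 : ℤ), (-2297530189 : ℤ), (1 : ℤ)]]

def cc7q3 : Fin 8 → ℤ := ![(29144121883474412698076992183893136564321562033882211310005667169 : ℤ), (26232826417233602952636095660029190976069272620774064345590 : ℤ), (154437114411361314749025267321300211490118576085798410 : ℤ), (95776713286049350351151243677151203550652661565000 : ℤ), (65428346038643663914791128318574282364320843169375 : ℤ), (178685977325015489097079457572520931451758060245625 : ℤ), (301628199236829325584288783180812499041731038826087115000 : ℤ), (132475189649839634677418355841560798340268408305448509270758265263677320000 : ℤ)]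

def certc7q3 : Cert (fractionGraph 7 3) (21109791/10000000) :=
  certOfInt 7 3 21109791 10000000 cc7q3 wc7q3 (by norm_num) (by norm_num) (by decide) (by decide)
    (by decide) (by decide) (by decide)

def wc8q3 : Fin 9 → Fin 9 → ℤ := ![
    ![(1464559 : ℤ), (0 : ℤ), (0 : ℤ), (0 : ℤ), (0 : ℤ), (0 : ℤ), (0 : ℤ), (0 : ℤ), (0 : ℤ)],
    ![(625000 : ℤ), (839559000 : ℤ), (0 : ℤ), (0 : ℤ), (0 : ℤ), (0 : ℤ), (0 : ℤ), (0 : ℤ), (0 : ℤ)],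
    ![(625000 : ℤ), (410443213 : ℤ), (366250648409 : ℤ), (0 : ℤ), (0 : ℤ), (0 : ℤ), (0 : ℤ), (0 : ℤ), (0 : ℤ)],
    ![(625000 : ℤ), (107279500 : ℤ), (205221606500 : ℤ), (156360898409000 : ℤ), (0 : ℤ), (0 : ℤ), (0 : ℤ), (0 : ℤ), (0 : ℤ)],
    ![(625000 : ℤ), (-625000000 : ℤ), (236654500000 : ℤ), (64765905175163 : ℤ), (27741347909759 : ℤ), (0 : ℤ), (0 : ℤ), (0 : ℤ), (0 : ℤ)],
    ![(625000 : ℤ), (-625000000 : ℤ), (-183125000000 : ℤ), (91562824204500 : ℤ), (-7984912418500 : ℤ), (16523409000 : ℤ), (0 : ℤ), (0 : ℤ), (0 : ℤ)],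
    ![(625000 : ℤ), (-625000000 : ℤ), (-183125000000 : ℤ), (-91562500000000 : ℤ), (8261704500000 : ℤ), (-15969824837 : ℤ), (1 : ℤ), (0 : ℤ), (0 : ℤ)],
    ![(625000 : ℤ), (107279500 : ℤ), (-388346606500 : ℤ), (-64798074204500 : ℤ), (-7984912418500 : ℤ), (16523409000 : ℤ), (0 : ℤ), (1 : ℤ), (0 : ℤ)],
    ![(625000 : ℤ), (410443213 : ℤ), (-53528851591 : ℤ), (-156328405175163 : ℤ), (-19479643409759 : ℤ), (-15969824837 : ℤ), (1 : ℤ), (0 : ℤ), (1 : ℤ)]]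

def cc8q3 : Fin 9 → ℤ := ![(8395676287683351347470079219559122512584384941352 : ℤ), (6250064235869182025526257847541925666171455 : ℤ), (24992687021807875043550202194116315705 : ℤ), (134194901262694738087560844822455 : ℤ), (1771686428522595068686247316705 : ℤ), (2531583811251458742677137554435447455 : ℤ), (45537470516208656714075547789793464489745001377868818105 : ℤ), (0 : ℤ), (0 : ℤ)]

def certc8q3 : Cert (fractionGraph 8 3) (1464559/625000) :=
  certOfInt 8 3 1464559 625000 cc8q3 wc8q3 (by norm_num) (by norm_num) (by decide) (by decide)
    (by decide) (by decide) (by decide)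

def wc11q5 : Fin 12 → Fin 12 → ℤ := ![
    ![(20438519 : ℤ), (0 : ℤ), (0 : ℤ), (0 : ℤ), (0 : ℤ), (0 : ℤ), (0 : ℤ), (0 : ℤ), (0 : ℤ), (0 : ℤ), (0 : ℤ), (0 : ℤ)],
    ![(10000000 : ℤ), (10438519000 : ℤ), (0 : ℤ), (0 : ℤ), (0 : ℤ), (0 : ℤ), (0 : ℤ), (0 : ℤ), (0 : ℤ), (0 : ℤ), (0 : ℤ), (0 : ℤ)],
    ![(10000000 : ℤ), (8762560442 : ℤ), (787244257122 : ℤ), (0 : ℤ), (0 : ℤ), (0 : ℤ), (0 : ℤ), (0 : ℤ), (0 : ℤ), (0 : ℤ), (0 : ℤ), (0 : ℤ)],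
    ![(10000000 : ℤ), (4327401819 : ℤ), (1310002786079 : ℤ), (4165047199456 : ℤ), (0 : ℤ), (0 : ℤ), (0 : ℤ), (0 : ℤ), (0 : ℤ), (0 : ℤ), (0 : ℤ), (0 : ℤ)],
    ![(10000000 : ℤ), (-1477137577 : ℤ), (1421707057343 : ℤ), (4260352015243 : ℤ), (25296239497335 : ℤ), (0 : ℤ), (0 : ℤ), (0 : ℤ), (0 : ℤ), (0 : ℤ), (0 : ℤ), (0 : ℤ)],
    ![(10000000 : ℤ), (-6832029555 : ℤ), (1087332777245 : ℤ), (2860784121169 : ℤ), (12309319044373 : ℤ), (24960968985628 : ℤ), (0 : ℤ), (0 : ℤ), (0 : ℤ), (0 : ℤ), (0 : ℤ), (0 : ℤ)],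
    ![(10000000 : ℤ), (-10000000000 : ℤ), (398985222500 : ℤ), (2640423377629 : ℤ), (8388761773745 : ℤ), (3029558994770 : ℤ), (9881538760618 : ℤ), (0 : ℤ), (0 : ℤ), (0 : ℤ), (0 : ℤ), (0 : ℤ)],
    ![(10000000 : ℤ), (-10000000000 : ℤ), (-410000000000 : ℤ), (-567140146090 : ℤ), (9110239620974 : ℤ), (-1002142913836 : ℤ), (-982368024428 : ℤ), (420984227160 : ℤ), (0 : ℤ), (0 : ℤ), (0 : ℤ), (0 : ℤ)],
    ![(10000000 : ℤ), (-6832029555 : ℤ), (-1089098434255 : ℤ), (-2726278326410 : ℤ), (-9918036213330 : ℤ), (2919396922515 : ℤ), (-2114744309051 : ℤ), (-164115704829 : ℤ), (2394788433 : ℤ), (0 : ℤ), (0 : ℤ), (0 : ℤ)],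
    ![(10000000 : ℤ), (-1477137577 : ℤ), (-1428008629657 : ℤ), (-3168354823619 : ℤ), (-10611654213071 : ℤ), (-7387943958491 : ℤ), (2080630163745 : ℤ), (-61154794868 : ℤ), (-1124120744 : ℤ), (561566850 : ℤ), (0 : ℤ), (0 : ℤ)],
    ![(10000000 : ℤ), (4327401819 : ℤ), (-1304846223421 : ℤ), (-4744954243055 : ℤ), (-13767498204395 : ℤ), (-11294392519760 : ℤ), (-3864801565090 : ℤ), (58267261408 : ℤ), (-837736916 : ℤ), (-295808261 : ℤ), (46410127 : ℤ), (0 : ℤ)],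
    ![(10000000 : ℤ), (8762560442 : ℤ), (-773314333378 : ℤ), (-2718539780501 : ℤ), (-20783948247817 : ℤ), (-11095874481982 : ℤ), (-4907910819742 : ℤ), (-246164671551 : ℤ), (-325857933 : ℤ), (-236695961 : ℤ), (-42258323 : ℤ), (1 : ℤ)]]

def cc11q5 : Fin 12 → ℤ := ![(42774765041174877240820074263234395572787480300185079330573866993301700391489606266153574516 : ℤ), (40977810205810687551385473612908493602193453209392136308391896391913163535449431347640 : ℤ), (2127740519903376001910800964140587012087237182242031111502649516439691267932791560 : ℤ), (2666291494485607954945897566824809662364840414892879332485713276123375708548125 : ℤ), (41488828153057395113366804810073641669251845600440717529588767812163303998875 : ℤ), (13845850904834602938940417475355067440654421643119511845347163911150190158000 : ℤ), (70889356206134806498853586371227301193506788576356718640039234904461299770000 : ℤ), (29422169175472979760912794245615470093904670286641535158066037379791813643687000 : ℤ), (598347071900486185153639032066538806723856063946225823412431908425461482874657017000 : ℤ), (10679925947054809960362790279857250648439364517310188112324738444493329555736819623600 : ℤ), (1285876980133552928872829777867582199666970512243843298476255111062012156385242894563600 : ℤ), (473375068844929462231751153367641020927333562460821097536527218917267271354629182999004909423509680000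 : ℤ)]

def certc11q5 : Cert (fractionGraph 11 5) (20438519/10000000) :=
  certOfInt 11 5 20438519 10000000 cc11q5 wc11q5 (by norm_num) (by norm_num) (by decide) (by decide)
    (by decide) (by decide) (by decide)

def wc11q4 : Fin 12 → Fin 12 → ℤ := ![
    ![(24082479 : ℤ), (0 : ℤ), (0 : ℤ), (0 : ℤ), (0 : ℤ), (0 : ℤ), (0 : ℤ), (0 : ℤ), (0 : ℤ), (0 : ℤ), (0 : ℤ), (0 : ℤ)],
    ![(10000000 : ℤ), (704123950000 : ℤ), (0 : ℤ), (0 : ℤ), (0 : ℤ), (0 : ℤ), (0 : ℤ), (0 : ℤ), (0 : ℤ), (0 : ℤ), (0 : ℤ), (0 : ℤ)],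
    ![(10000000 : ℤ), (401262694096 : ℤ), (868833902259456 : ℤ), (0 : ℤ), (0 : ℤ), (0 : ℤ), (0 : ℤ), (0 : ℤ), (0 : ℤ), (0 : ℤ), (0 : ℤ), (0 : ℤ)],
    ![(10000000 : ℤ), (221270246050 : ℤ), (502832313539050 : ℤ), (8574507608743499050 : ℤ), (0 : ℤ), (0 : ℤ), (0 : ℤ), (0 : ℤ), (0 : ℤ), (0 : ℤ), (0 : ℤ), (0 : ℤ)],
    ![(10000000 : ℤ), (25407444343 : ℤ), (377885256587973 : ℤ), (4935379522092438021 : ℤ), (649126427795467279381262 : ℤ), (0 : ℤ), (0 : ℤ), (0 : ℤ), (0 : ℤ), (0 : ℤ), (0 : ℤ), (0 : ℤ)],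
    ![(10000000 : ℤ), (-500000000000 : ℤ), (567117013571875 : ℤ), (3585816394094626675 : ℤ), (241980138451526452944325 : ℤ), (1719081198893293211833200 : ℤ), (0 : ℤ), (0 : ℤ), (0 : ℤ), (0 : ℤ), (0 : ℤ), (0 : ℤ)],
    ![(10000000 : ℤ), (-500000000000 : ℤ), (-393000000000000 : ℤ), (5537849622797275776 : ℤ), (222381369106008304973372 : ℤ), (-148474463367545226945521 : ℤ), (7185613330469238193040489 : ℤ), (0 : ℤ), (0 : ℤ), (0 : ℤ), (0 : ℤ), (0 : ℤ)],
    ![(10000000 : ℤ), (-500000000000 : ℤ), (-393000000000000 : ℤ), (-3939825000000000000 : ℤ), (374136187712327675095400 : ℤ), (331017561668287164916750 : ℤ), (-1413680873987202720469150 : ℤ), (7074969151255612199383200 : ℤ), (0 : ℤ), (0 : ℤ), (0 : ℤ), (0 : ℤ)],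
    ![(10000000 : ℤ), (-500000000000 : ℤ), (-393000000000000 : ℤ), (-3939825000000000000 : ℤ), (-374143942287500000000000 : ℤ), (201904234502768521986108 : ℤ), (-165454897887857300913372 : ℤ), (-2324681135289771938271580 : ℤ), (243518356044526763256620 : ℤ), (0 : ℤ), (0 : ℤ), (0 : ℤ)],
    ![(10000000 : ℤ), (25407444343 : ℤ), (-940146762318277 : ℤ), (-3792326561739228901 : ℤ), (-222380403573217967240872 : ℤ), (-788948046685003821233892 : ℤ), (1560437005825034380704228 : ℤ), (219056975972291079182587 : ℤ), (-71536102167394433714543 : ℤ), (166961092589607782777840 : ℤ), (0 : ℤ), (0 : ℤ)],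
    ![(10000000 : ℤ), (221270246050 : ℤ), (-183996591939075 : ℤ), (-9222487989040924275 : ℤ), (-241992526516554206137875 : ℤ), (-257923931465347537712450 : ℤ), (-3373706510367267046453150 : ℤ), (1589064213956755056743813 : ℤ), (16699210218058051549223 : ℤ), (-49974765818557625408431 : ℤ), (4129054730542563 : ℤ), (0 : ℤ)],
    ![(10000000 : ℤ), (401262694096 : ℤ), (-13521422584294 : ℤ), (-1739051413052688646 : ℤ), (-649103719533992563051262 : ℤ), (-789337958054031999405521 : ℤ), (-1727209637630292279279511 : ℤ), (-3880542949519879197848420 : ℤ), (15458355477169990767100 : ℤ), (14621674259541431835391 : ℤ), (-1136388363232163 : ℤ), (1 : ℤ)]]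

def cc11q4 : Fin 12 → ℤ := ![(93025238953198356732563445279265219693527159856709064209369214309843265384365732353801771121443816288413654517161586853046460314507467130255575618936605894308785657881286119425130556000 : ℤ), (26422972532946324786300322629067004379989392451913917772394821766776507285220374155374709558294052144771855727151898995353434665731073948061438790410866125007901139531267504656 : ℤ), (11718339802117566569120707224389492742852063332637061403423596832697646517953515769393998041337437854501129410883877279251513073761213742279128483364485237889820029775339 : ℤ), (120286261401404799599036802503296467131425232534209743211668951504439517477025029186375336162458177591909049516966201127366382552677019293179546617495189122925125 : ℤ), (20124889660653498310286989264956552325652643070803275378284621839020975143038732346548264286878339401946092882041234493233294974978880670215408940742000 : ℤ), (200759591381125914404699620572942329085462498505362257476774908222315261797878460531907832217192799164766865010169024433992719965150762384179948500 : ℤ), (9068005082204850381349216943928415365199667012514456025230172977346253985925971294075727393558063757223463112501773549225531447021092845473931500 : ℤ), (8813402130818131554058768683227587208853273042147583344522400858972623554097033647412158664328833821540176977652939790081853415760402499871101000 : ℤ), (5201225966424729553314139035281002000987929798106591148052569986721972569235585987440196764109613515981030622667658726201166326575166933540336619000 : ℤ), (11020086383722875443172169974084329961590922387667095608168208303875100635621246051704754732500562323681536957571334654782135952749101269199367018500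 : ℤ), (17880128772141344462717527834566603747171687455563312872867048293315969383163184426171734669746480722728272056812116861565440311231975326179614847804187210236393500 : ℤ), (281749963623021961316261515490323037381009768467554964563520034416739990099841768258658524521757615206428661950281929315026835261067497540623513201134732019370576931751895585491076768314382400000 : ℤ)]

def certc11q4 : Cert (fractionGraph 11 4) (24082479/10000000) :=
  certOfInt 11 4 24082479 10000000 cc11q4 wc11q4 (by norm_num) (by norm_num) (by decide) (by decide)
    (by decide) (by decide) (by decide)

def wc14q5 : Fin 15 → Fin 15 → ℤ := ![
    ![(1535089 : ℤ), (0 : ℤ), (0 : ℤ), (0 : ℤ), (0 : ℤ), (0 : ℤ), (0 : ℤ), (0 : ℤ), (0 : ℤ), (0 : ℤ), (0 : ℤ), (0 : ℤ), (0 : ℤ), (0 : ℤ), (0 : ℤ)],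
    ![(625000 : ℤ), (910089000 : ℤ), (0 : ℤ), (0 : ℤ), (0 : ℤ), (0 : ℤ), (0 : ℤ), (0 : ℤ), (0 : ℤ), (0 : ℤ), (0 : ℤ), (0 : ℤ), (0 : ℤ), (0 : ℤ), (0 : ℤ)],
    ![(625000 : ℤ), (561623797 : ℤ), (334078804919 : ℤ), (0 : ℤ), (0 : ℤ), (0 : ℤ), (0 : ℤ), (0 : ℤ), (0 : ℤ), (0 : ℤ), (0 : ℤ), (0 : ℤ), (0 : ℤ), (0 : ℤ), (0 : ℤ)],
    ![(625000 : ℤ), (369737672 : ℤ), (197691576544 : ℤ), (122427811206976 : ℤ), (0 : ℤ), (0 : ℤ), (0 : ℤ), (0 : ℤ), (0 : ℤ), (0 : ℤ), (0 : ℤ), (0 : ℤ), (0 : ℤ), (0 : ℤ), (0 : ℤ)],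
    ![(625000 : ℤ), (196272615 : ℤ), (147393940605 : ℤ), (72854574450210 : ℤ), (22285305810211890 : ℤ), (0 : ℤ), (0 : ℤ), (0 : ℤ), (0 : ℤ), (0 : ℤ), (0 : ℤ), (0 : ℤ), (0 : ℤ), (0 : ℤ), (0 : ℤ)],
    ![(625000 : ℤ), (-20174934 : ℤ), (123742838982 : ℤ), (55369446230386 : ℤ), (12859572115956482 : ℤ), (3855624924958580996 : ℤ), (0 : ℤ), (0 : ℤ), (0 : ℤ), (0 : ℤ), (0 : ℤ), (0 : ℤ), (0 : ℤ), (0 : ℤ), (0 : ℤ)],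
    ![(625000 : ℤ), (-625000000 : ℤ), (216700066000 : ℤ), (50901679473329 : ℤ), (8137867961607929 : ℤ), (1370712789593487947 : ℤ), (12251787137179758775 : ℤ), (0 : ℤ), (0 : ℤ), (0 : ℤ), (0 : ℤ), (0 : ℤ), (0 : ℤ), (0 : ℤ), (0 : ℤ)],
    ![(625000 : ℤ), (-625000000 : ℤ), (-141875000000 : ℤ), (81687049138086 : ℤ), (8504788331174710 : ℤ), (1101092586723843385 : ℤ), (-594053779126875261 : ℤ), (65037360201169656048 : ℤ), (0 : ℤ), (0 : ℤ), (0 : ℤ), (0 : ℤ), (0 : ℤ), (0 : ℤ), (0 : ℤ)],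
    ![(625000 : ℤ), (-625000000 : ℤ), (-141875000000 : ℤ), (-49940000000000 : ℤ), (14225978807774272 : ℤ), (1226553403638253621 : ℤ), (2030517766527089645 : ℤ), (-7580349148054492035 : ℤ), (111844630625435351787 : ℤ), (0 : ℤ), (0 : ℤ), (0 : ℤ), (0 : ℤ), (0 : ℤ), (0 : ℤ)],
    ![(625000 : ℤ), (-625000000 : ℤ), (-141875000000 : ℤ), (-49940000000000 : ℤ), (-9892300000000000 : ℤ), (2188775050861742330 : ℤ), (2709035824256581742 : ℤ), (9824711860401660944 : ℤ), (-14110759819211259216 : ℤ), (287561151364373436224 : ℤ), (0 : ℤ), (0 : ℤ), (0 : ℤ), (0 : ℤ), (0 : ℤ)],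
    ![(625000 : ℤ), (-625000000 : ℤ), (-141875000000 : ℤ), (-49940000000000 : ℤ), (-9892300000000000 : ℤ), (-2201430193750000000 : ℤ), (-873239495069087576 : ℤ), (-3069079735680405082 : ℤ), (4625920490932287178 : ℤ), (-47213719124532385225 : ℤ), (1241470728238404529255 : ℤ), (0 : ℤ), (0 : ℤ), (0 : ℤ), (0 : ℤ)],
    ![(625000 : ℤ), (-20174934 : ℤ), (-363154776018 : ℤ), (-55348625906086 : ℤ), (-7937405836434902 : ℤ), (-1224359153906657606 : ℤ), (-7864572795620512326 : ℤ), (-7802101816898327232 : ℤ), (-7745929171435917728 : ℤ), (9757470789416254638 : ℤ), (-554957736843286126514 : ℤ), (35658082807015519892 : ℤ), (0 : ℤ), (0 : ℤ), (0 : ℤ)],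
    ![(625000 : ℤ), (196272615 : ℤ), (-83768665395 : ℤ), (-135174681310001 : ℤ), (-9385655936236025 : ℤ), (-1100288232209423735 : ℤ), (-1194004153506185283 : ℤ), (-42993912832220616806 : ℤ), (-14716312053636360330 : ℤ), (-21125964658582916294 : ℤ), (-32861333470581361446 : ℤ), (-21169502397702273417 : ℤ), (69456203360017821 : ℤ), (0 : ℤ), (0 : ℤ)],
    ![(625000 : ℤ), (369737672 : ℤ), (-18909605456 : ℤ), (-32973349356466 : ℤ), (-23945984240704354 : ℤ), (-1378775039009403817 : ℤ), (-1475146813845944355 : ℤ), (-2350743473877613760 : ℤ), (-73160751766486344592 : ℤ), (-37277636650348442834 : ℤ), (-113010581459819172466 : ℤ), (-1645055896921031332 : ℤ), (-48022919385363056 : ℤ), (130099045283 : ℤ), (0 : ℤ)],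
    ![(625000 : ℤ), (561623797 : ℤ), (13727476919 : ℤ), (-9923320627234 : ℤ), (-4959751471286002 : ℤ), (-3837880424195760121 : ℤ), (-4972570213902857561 : ℤ), (-10907263697128452477 : ℤ), (-6409051851991985899 : ℤ), (-190807417998617726409 : ℤ), (-529171436624005231129 : ℤ), (-12269348218772961743 : ℤ), (-19728185083406165 : ℤ), (-125638144858 : ℤ), (1 : ℤ)]]

def cc14q5 : Fin 15 → ℤ := ![(46072698313660063506532215362974022131675359341151822361582039768892801472553987127083519487660225411075235795758516119960398996793624194324284540678784273890946869130957498852181069416233457216 : ℤ), (31640242268654537843642363111584431667998513978544833500887028472553784212693749682093948701487042346322197468982783634320653664637211439158893073011804528108615523544234065879944893724840 : ℤ), (145386618812058256636890898643471849149237080771701794900011729381650135312216219361852157566616855898024901993418377463043626751181674149524994902529487281764597323810850889466806040 : ℤ), (1080757396735260126293805916008347796471148471976068319011585189458910882779011771996314854530360788988554490846798554859867040632461671989893424330424213470254553572066129606875 : ℤ), (32403247465712232303270583356722706846180841330295322265442987833316233646796418988934801686149046192743734071515418043842759318641370545270763941476822652824383300317855125 : ℤ), (1028901602317491186946343135542527059509057810349491919824137824861174962394655081742833342954756679323796224771790067254156960951349187269496686694340003654735341162000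 : ℤ), (935756824679065952196431500772795309153797509004515069922833760241581705911849613693510564939482639850218758130480702501089187157253907159250971959889236738370063600 : ℤ), (27737344549139752675019303514238709345985063529033015375546809531088191994150797453416195084158012245593606083285555793821554990035657922474391646357271909496334850 : ℤ), (9115288930715731393888708521540597878898917065350382321112934040537358084780285826807457039050286962953150806857099670885183387492533731446224601168394832996678750 : ℤ), (1374395965778431473225977924571274638963613259083838489200725919970614650482701346720344275808351657263806663325376151918784585147741485588922327978879206737014375 : ℤ), (41273307437998093543698608076346452886182444568725759817183461420242783935864799076057746711351136727126109319815208513884218811521138527317083730203477351589625 : ℤ), (40939884071210459770535752724132330661703822151969441880723268500981174745730927341852154402321055824525462398239771467894186151640012867445803229337526770686094000 : ℤ), (9512954178759621482330739630549329424194749335674879618921849938092274657630847820996267543259369880449352091338663703793892388087975898502766997855386216869580673410000 : ℤ), (2492626321699265652537941073258636531172780871890079728812822954061218585161997956665779022250355857717416653022726320511394799133914534750803304424670396679493629135685994891040000 : ℤ), (2843633324505341246037359775223363844992415515762343689442336459463900369567372739355181616202581833550024287951622125162825845054340629023852599981180590813728030148129681422377006967503626701572000000 : ℤ)]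

def certc14q5 : Cert (fractionGraph 14 5) (1535089/625000) :=
  certOfInt 14 5 1535089 625000 cc14q5 wc14q5 (by norm_num) (by norm_num) (by decide) (by decide)
    (by decide) (by decide) (by decide)
def S1 : Finset ((ZMod 2 × ZMod 5) × ZMod 5) :=
  {((0, 0), 0), ((0, 1), 2), ((0, 2), 4), ((0, 3), 1), ((0, 4), 3), ((1, 0), 0), ((1, 1), 2), ((1, 2), 4), ((1, 3), 1), ((1, 4), 3)}
def S2 : Finset ((ZMod 5 × ZMod 5) × ZMod 3) :=
  {((0, 0), 0), ((0, 0), 1), ((0, 0), 2), ((1, 2), 0), ((1, 2), 1), ((1, 2), 2), ((2, 4), 0), ((2, 4), 1), ((2, 4), 2), ((3, 1), 0), ((3, 1), 1), ((3, 1), 2), ((4, 3), 0), ((4, 3), 1), ((4, 3), 2)}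
def S3 : Finset ((ZMod 9 × ZMod 7) × ZMod 5) :=
  {((0, 0), 0), ((8, 4), 4), ((7, 1), 3), ((6, 5), 2), ((4, 6), 0), ((5, 2), 1), ((3, 3), 4), ((2, 6), 2), ((1, 3), 1)}
def S4 : Finset ((ZMod 5 × ZMod 5) × ZMod 8) :=
  {((0, 0), 0), ((4, 4), 5), ((4, 3), 2), ((4, 2), 7), ((2, 4), 6), ((3, 1), 4), ((3, 0), 1), ((1, 4), 3), ((1, 2), 6), ((2, 2), 1), ((0, 1), 3)}
def S5 : Finset ((ZMod 8 × ZMod 8) × ZMod 8) :=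
  {((0, 0), 0), ((7, 7), 5), ((7, 4), 7), ((6, 5), 2), ((6, 2), 4), ((3, 6), 1), ((5, 1), 1), ((3, 0), 6), ((4, 5), 5), ((2, 3), 0), ((2, 1), 3), ((1, 4), 4)}
def S6 : Finset ((ZMod 11 × ZMod 11) × ZMod 11) :=
  {((0, 0), 0), ((1, 2), 4), ((2, 4), 8), ((3, 6), 1), ((4, 8), 5), ((5, 10), 9), ((6, 1), 2), ((7, 3), 6), ((8, 5), 10), ((9, 7), 3), ((10, 9), 7)}
def S7 : Finset ((ZMod 11 × ZMod 11) × ZMod 11) :=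
  {((0, 0), 0), ((10, 9), 7), ((9, 4), 10), ((10, 7), 3), ((8, 2), 6), ((6, 8), 9), ((4, 1), 8), ((7, 0), 2), ((6, 6), 5), ((5, 4), 1), ((3, 10), 4), ((2, 5), 8), ((1, 3), 4)}
def S8 : Finset ((ZMod 14 × ZMod 14) × ZMod 14) :=
  {((0, 0), 0), ((1, 3), 5), ((2, 6), 10), ((3, 9), 1), ((4, 12), 6), ((5, 1), 11), ((6, 4), 2), ((7, 7), 7), ((8, 10), 12), ((9, 13), 3), ((10, 2), 8), ((11, 5), 13), ((12, 8), 4), ((13, 11), 9)}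

theorem case1 : indepNumber (strongProd (strongProd (fractionGraph 2 1) (fractionGraph 5 2))
    (fractionGraph 5 2)) = 10 :=
  indepNum_eq_of S1 (by decide) (by decide)
    (fun s hs => Cert.card_le ((certc2q1.prod certc5q2).prod certc5q2) (by norm_num) s hs)

theorem case2 : indepNumber (strongProd (strongProd (fractionGraph 5 2) (fractionGraph 5 2))
    (fractionGraph 3 1)) = 15 :=
  indepNum_eq_of S2 (by decide) (by decide)
    (fun s hs => Cert.card_le ((certc5q2.prod certc5q2).prod certc3q1) (by norm_num) s hs)

theorem case3 : indepNumber (strongProd (strongProd (fractionGraph 9 4) (fractionGraph 7 3))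
    (fractionGraph 5 2)) = 9 :=
  indepNum_eq_of S3 (by decide) (by decide)
    (fun s hs => Cert.card_le ((certc9q4.prod certc7q3).prod certc5q2) (by norm_num) s hs)

theorem case4 : indepNumber (strongProd (strongProd (fractionGraph 5 2) (fractionGraph 5 2))
    (fractionGraph 8 3)) = 11 :=
  indepNum_eq_of S4 (by decide) (by decide)
    (fun s hs => Cert.card_le ((certc5q2.prod certc5q2).prod certc8q3) (by norm_num) s hs)

theorem case5 : indepNumber (strongProd (strongProd (fractionGraph 8 3) (fractionGraph 8 3))
    (fractionGraph 8 3)) = 12 :=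
  indepNum_eq_of S5 (by decide) (by decide)
    (fun s hs => Cert.card_le ((certc8q3.prod certc8q3).prod certc8q3) (by norm_num) s hs)

theorem case6 : indepNumber (strongProd (strongProd (fractionGraph 11 5) (fractionGraph 11 4))
    (fractionGraph 11 4)) = 11 :=
  indepNum_eq_of S6 (by decide) (by decide)
    (fun s hs => Cert.card_le ((certc11q5.prod certc11q4).prod certc11q4) (by norm_num) s hs)

theorem case7 : indepNumber (strongProd (strongProd (fractionGraph 11 4) (fractionGraph 11 4))
    (fractionGraph 11 4)) = 13 :=
  indepNum_eq_of S7 (by decide) (by decide)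
    (fun s hs => Cert.card_le ((certc11q4.prod certc11q4).prod certc11q4) (by norm_num) s hs)

theorem case8 : indepNumber (strongProd (strongProd (fractionGraph 14 5) (fractionGraph 14 5))
    (fractionGraph 14 5)) = 14 :=
  indepNum_eq_of S8 (by decide) (by decide)
    (fun s hs => Cert.card_le ((certc14q5.prod certc14q5).prod certc14q5) (by norm_num) s hs)

end CertMachinery

/-- Independence numbers of triple strong products of fraction graphs. -/
theorem indepNum_triple_strongProd_fractionGraphs :
    indepNumber (strongProd (strongProd (fractionGraph 2 1) (fractionGraph 5 2))
      (fractionGraph 5 2)) = 10 ∧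
    indepNumber (strongProd (strongProd (fractionGraph 5 2) (fractionGraph 5 2))
      (fractionGraph 3 1)) = 15 ∧
    indepNumber (strongProd (strongProd (fractionGraph 9 4) (fractionGraph 7 3))
      (fractionGraph 5 2)) = 9 ∧
    indepNumber (strongProd (strongProd (fractionGraph 5 2) (fractionGraph 5 2))
      (fractionGraph 8 3)) = 11 ∧
    indepNumber (strongProd (strongProd (fractionGraph 8 3) (fractionGraph 8 3))
      (fractionGraph 8 3)) = 12 ∧
    indepNumber (strongProd (strongProd (fractionGraph 11 5) (fractionGraph 11 4))
      (fractionGraph 11 4)) = 11 ∧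
    indepNumber (strongProd (strongProd (fractionGraph 11 4) (fractionGraph 11 4))
      (fractionGraph 11 4)) = 13 ∧
    indepNumber (strongProd (strongProd (fractionGraph 14 5) (fractionGraph 14 5))
      (fractionGraph 14 5)) = 14 := by
  exact ⟨case1, case2, case3, case4, case5, case6, case7, case8⟩
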